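/- arXiv:2605.24644 — 2 statements merged into one kernel-verified Lean document; each statement's English description precedes it below -/
import Mathlib

section
/- Let μ, ν be compactly supported probability measures on ℝ^d, φ convex and differentiable with L-Lipschitz gradient T = ∇φ, T_#μ = ν, and π* = (Id, T)_#μ optimal for the quadratic cost c(x,y) = ½‖x - y‖². Then for every coupling π of (μ, ν): ∫ ‖y - T(x)‖² dπ(x,y) ≤ 2L (∫ c dπ - ∫ c dπ*). -/
/-!
Write `ψ` for the Legendre transform of `φ` (restricted to the compact support of `μ`, which keeps
it finite and continuous) and `D(x, y) = φ x + ψ y - ⟪x, y⟫ ≥ 0` for the Fenchel–Young gap. Since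
`½‖x - y‖² = D(x, y) + (½‖x‖² - φ x) + (½‖y‖² - ψ y)` and the last two terms integrate to the same
value against any coupling of `(μ, ν)`, while `D` vanishes on the graph of `T = ∇φ`,
`∫ c dπ - ∫ c dπ* = ∫ D dπ`. For `y = T w`, `D(x, y)` is the Bregman divergence
`φ x - φ w - ⟪∇φ w, x - w⟫`, which for `L`-smooth convex `φ` is at least `‖T x - T w‖² / (2L)`.
-/

open MeasureTheory Set
open scoped NNReal RealInnerProductSpace

section Smooth

variable {F : Type*} [NormedAddCommGroup F] [InnerProductSpace ℝ F] [CompleteSpace F]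

lemma HasGradientAt.hasDerivAt_comp_lineMap {φ : F → ℝ} {g a b : F} {t : ℝ}
    (h : HasGradientAt φ g (AffineMap.lineMap a b t)) :
    HasDerivAt (φ ∘ AffineMap.lineMap (k := ℝ) a b) ⟪g, b - a⟫ t := by
  simpa using h.hasFDerivAt.comp_hasDerivAt t AffineMap.hasDerivAt_lineMap

lemma ConvexOn.add_inner_sub_le {φ : F → ℝ} (hφ : ConvexOn ℝ univ φ) {g w : F}
    (hg : HasGradientAt φ g w) (x : F) : φ w + ⟪g, x - w⟫ ≤ φ x := by
  have hd : HasDerivAt (φ ∘ AffineMap.lineMap (k := ℝ) w x) ⟪g, x - w⟫ 0 :=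
    HasGradientAt.hasDerivAt_comp_lineMap (by rwa [AffineMap.lineMap_apply_zero])
  have := (hφ.comp_affineMap (AffineMap.lineMap w x)).le_slope_of_hasDerivAt
    (mem_univ 0) (mem_univ 1) zero_lt_one hd
  simp only [slope_def_field, Function.comp_apply, AffineMap.lineMap_apply_one,
    AffineMap.lineMap_apply_zero, sub_zero, div_one] at this
  linarith

lemma le_add_inner_add_mul_sq_of_lipschitzWith_gradient {φ : F → ℝ} {T : F → F} {L : ℝ≥0}
    (hT : ∀ x, HasGradientAt φ (T x) x) (hL : LipschitzWith L T) (a b : F) :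
    φ b ≤ φ a + ⟪T a, b - a⟫ + L / 2 * ‖b - a‖ ^ 2 := by
  let h (t : ℝ) := φ (AffineMap.lineMap a b t) - t * ⟪T a, b - a⟫ - L / 2 * ‖b - a‖ ^ 2 * t ^ 2
  have hderiv (t : ℝ) : HasDerivAt h
      (⟪T (AffineMap.lineMap a b t), b - a⟫ - ⟪T a, b - a⟫ - L * ‖b - a‖ ^ 2 * t) t := by
    have := (((hT (AffineMap.lineMap a b t)).hasDerivAt_comp_lineMap).sub
      ((hasDerivAt_id t).mul_const ⟪T a, b - a⟫)).sub
      ((hasDerivAt_pow 2 t).const_mul (L / 2 * ‖b - a‖ ^ 2))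
    refine this.congr_deriv ?_
    push_cast
    ring
  have hanti : AntitoneOn h (Icc 0 1) := by
    refine antitoneOn_of_hasDerivWithinAt_nonpos (convex_Icc 0 1)
      (fun t _ => (hderiv t).continuousAt.continuousWithinAt)
      (fun t _ => (hderiv t).hasDerivWithinAt) fun t ht => ?_
    rw [interior_Icc] at ht
    have : ⟪T (AffineMap.lineMap a b t) - T a, b - a⟫ ≤ L * ‖b - a‖ ^ 2 * t :=
      calc ⟪T (AffineMap.lineMap a b t) - T a, b - a⟫
          ≤ ‖T (AffineMap.lineMap a b t) - T a‖ * ‖b - a‖ := real_inner_le_norm _ _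
        _ ≤ L * dist (AffineMap.lineMap a b t) a * ‖b - a‖ := by
          gcongr
          rw [← dist_eq_norm]
          exact hL.dist_le_mul _ _
        _ = L * ‖b - a‖ ^ 2 * t := by
          rw [dist_lineMap_left, Real.norm_of_nonneg ht.1.le, dist_eq_norm']
          ring
    rw [inner_sub_left] at this
    linarith
  have := hanti (left_mem_Icc.2 zero_le_one) (right_mem_Icc.2 zero_le_one) zero_le_one
  simp only [h, AffineMap.lineMap_apply_zero, AffineMap.lineMap_apply_one] at this
  linarith

lemma ConvexOn.sq_norm_sub_le_of_lipschitzWith_gradient {φ : F → ℝ} {T : F → F} {L : ℝ≥0}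
    (hφ : ConvexOn ℝ univ φ) (hT : ∀ x, HasGradientAt φ (T x) x) (hL : LipschitzWith L T)
    (hL₀ : 0 < L) (w x : F) :
    ‖T x - T w‖ ^ 2 ≤ 2 * L * (φ x - φ w - ⟪T w, x - w⟫) := by
  have hL₀' : (0 : ℝ) < L := hL₀
  -- the descent lemma at `x` and the subgradient inequality at `w`, both evaluated at the
  -- gradient step `u = x - δ / L`
  set δ := T x - T w
  set u := x - (L : ℝ)⁻¹ • δ
  have hdescent := le_add_inner_add_mul_sq_of_lipschitzWith_gradient hT hL x u
  have hsub := hφ.add_inner_sub_le (hT w) u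
  rw [show u - x = -((L : ℝ)⁻¹ • δ) by simp [u], inner_neg_right, real_inner_smul_right,
    norm_neg, norm_smul, Real.norm_of_nonneg (by positivity)] at hdescent
  rw [show u - w = (x - w) - (L : ℝ)⁻¹ • δ by simp only [u]; abel, inner_sub_right,
    real_inner_smul_right] at hsub
  have hδ : ⟪T x, δ⟫ - ⟪T w, δ⟫ = ‖δ‖ ^ 2 := by
    rw [← inner_sub_left, real_inner_self_eq_norm_sq]
  have hhalf : (L : ℝ) / 2 * ((L : ℝ)⁻¹ * ‖δ‖) ^ 2 = (L : ℝ)⁻¹ / 2 * ‖δ‖ ^ 2 := by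
    field_simp
  have key : (L : ℝ)⁻¹ / 2 * ‖δ‖ ^ 2 ≤ φ x - φ w - ⟪T w, x - w⟫ := by
    linear_combination hsub + hdescent - (L : ℝ)⁻¹ * hδ + hhalf
  calc ‖δ‖ ^ 2 = 2 * L * ((L : ℝ)⁻¹ / 2 * ‖δ‖ ^ 2) := by field_simp
    _ ≤ _ := by gcongr

end Smooth

section Conjugate

variable {F : Type*} [NormedAddCommGroup F] [InnerProductSpace ℝ F]

/-- Stands in for the Legendre transform `φ*`: for compact `K` the supremum is finite and
Lipschitz in `y`, and it still agrees with `φ*` at the gradients `∇φ w`, `w ∈ K`. -/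
noncomputable def restrictedConjugate (φ : F → ℝ) (K : Set F) (y : F) : ℝ :=
  sSup ((fun x => ⟪x, y⟫ - φ x) '' K)

def fenchelYoungGap (φ ψ : F → ℝ) (p : F × F) : ℝ :=
  φ p.1 + ψ p.2 - ⟪p.1, p.2⟫

variable {φ : F → ℝ} {K : Set F}

lemma inner_sub_le_restrictedConjugate (hK : IsCompact K) (hφ : ContinuousOn φ K) {x : F}
    (hx : x ∈ K) (y : F) : ⟪x, y⟫ - φ x ≤ restrictedConjugate φ K y :=
  le_csSup (hK.bddAbove_image ((continuous_id.inner continuous_const).continuousOn.sub hφ))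
    (mem_image_of_mem _ hx)

lemma lipschitzWith_restrictedConjugate (hK : IsCompact K) (hφ : ContinuousOn φ K) {R : ℝ≥0}
    (hR : ∀ x ∈ K, ‖x‖ ≤ R) : LipschitzWith R (restrictedConjugate φ K) := by
  rcases K.eq_empty_or_nonempty with rfl | hne
  · convert LipschitzWith.const' (α := F) (K := R) (0 : ℝ) using 1
    ext
    simp [restrictedConjugate]
  refine LipschitzWith.of_le_add_mul R fun y₁ y₂ => csSup_le (hne.image _) ?_
  rintro _ ⟨x, hx, rfl⟩
  calc ⟪x, y₁⟫ - φ x = ⟪x, y₂⟫ - φ x + ⟪x, y₁ - y₂⟫ := by rw [inner_sub_right]; ring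
    _ ≤ restrictedConjugate φ K y₂ + R * dist y₁ y₂ := by
      gcongr
      · exact inner_sub_le_restrictedConjugate hK hφ hx y₂
      · calc ⟪x, y₁ - y₂⟫ ≤ ‖x‖ * ‖y₁ - y₂‖ := real_inner_le_norm _ _
          _ ≤ R * dist y₁ y₂ := by rw [dist_eq_norm]; gcongr; exact hR x hx

lemma continuous_restrictedConjugate (hK : IsCompact K) (hφ : ContinuousOn φ K) :
    Continuous (restrictedConjugate φ K) := by
  obtain ⟨R, hR⟩ := hK.isBounded.exists_norm_le
  exact (lipschitzWith_restrictedConjugate hK hφ (R := R.toNNReal)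
    fun x hx => (hR x hx).trans (Real.le_coe_toNNReal R)).continuous

lemma ConvexOn.restrictedConjugate_eq [CompleteSpace F] (hφ : ConvexOn ℝ univ φ) {g w : F}
    (hg : HasGradientAt φ g w) (hw : w ∈ K) :
    restrictedConjugate φ K g = ⟪w, g⟫ - φ w := by
  have hle : ∀ x, ⟪x, g⟫ - φ x ≤ ⟪w, g⟫ - φ w := fun x => by
    have := hφ.add_inner_sub_le hg x
    rw [inner_sub_right, real_inner_comm x g, real_inner_comm w g] at this
    linarith
  refine le_antisymm (csSup_le ⟨_, mem_image_of_mem _ hw⟩ ?_)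
    (le_csSup ⟨⟪w, g⟫ - φ w, ?_⟩ (mem_image_of_mem _ hw))
  all_goals rintro _ ⟨x, -, rfl⟩; exact hle x

lemma ConvexOn.sq_norm_sub_le_fenchelYoungGap [CompleteSpace F] {T : F → F} {L : ℝ≥0}
    (hφ : ConvexOn ℝ univ φ) (hT : ∀ x, HasGradientAt φ (T x) x) (hL : LipschitzWith L T)
    (hL₀ : 0 < L) {w : F} (hw : w ∈ K) (x : F) :
    ‖T w - T x‖ ^ 2 ≤ 2 * L * fenchelYoungGap φ (restrictedConjugate φ K) (x, T w) := by
  calc ‖T w - T x‖ ^ 2 = ‖T x - T w‖ ^ 2 := by rw [norm_sub_rev]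
    _ ≤ 2 * L * (φ x - φ w - ⟪T w, x - w⟫) :=
      hφ.sq_norm_sub_le_of_lipschitzWith_gradient hT hL hL₀ w x
    _ = _ := by
      rw [fenchelYoungGap, hφ.restrictedConjugate_eq (hT w) hw, inner_sub_right,
        real_inner_comm (T w) x, real_inner_comm (T w) w]
      ring

end Conjugate

section Coupling

variable {α β : Type*} [MeasurableSpace α] [MeasurableSpace β] {π : Measure (α × β)}
  {μ : Measure α} {ν : Measure β}

lemma ae_mem_prod_of_map_fst_of_map_snd (hπ₁ : π.map Prod.fst = μ) (hπ₂ : π.map Prod.snd = ν)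
    {s : Set α} {t : Set β} (hs : ∀ᵐ x ∂μ, x ∈ s) (ht : ∀ᵐ y ∂ν, y ∈ t) :
    ∀ᵐ p ∂π, p ∈ s ×ˢ t := by
  subst hπ₁ hπ₂
  filter_upwards [ae_of_ae_map measurable_fst.aemeasurable hs,
    ae_of_ae_map measurable_snd.aemeasurable ht] with p h₁ h₂ using ⟨h₁, h₂⟩

lemma integral_add_fst_add_snd (hπ₁ : π.map Prod.fst = μ) (hπ₂ : π.map Prod.snd = ν)
    {f : α × β → ℝ} {u : α → ℝ} {v : β → ℝ} (hf : Integrable f π) (hu : Integrable u μ)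
    (hv : Integrable v ν) :
    ∫ p, f p + u p.1 + v p.2 ∂π = ∫ p, f p ∂π + ∫ x, u x ∂μ + ∫ y, v y ∂ν := by
  subst hπ₁ hπ₂
  have hu' : Integrable (fun p => u p.1) π := hu.comp_measurable measurable_fst
  have hv' : Integrable (fun p => v p.2) π := hv.comp_measurable measurable_snd
  rw [integral_add (f := fun p => f p + u p.1) (hf.add hu') hv', integral_add hf hu',
    integral_map measurable_fst.aemeasurable hu.aestronglyMeasurable,
    integral_map measurable_snd.aemeasurable hv.aestronglyMeasurable]

end Coupling

lemma Continuous.integrable_of_ae_mem_compact {X : Type*} [TopologicalSpace X] [T2Space X]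
    [MeasurableSpace X] [OpensMeasurableSpace X] {ρ : Measure X} [IsFiniteMeasure ρ]
    {f : X → ℝ} (hf : Continuous f) {K : Set X} (hK : IsCompact K) (hρ : ∀ᵐ x ∂ρ, x ∈ K) :
    Integrable f ρ := by
  simpa [IntegrableOn, Measure.restrict_eq_self_of_ae_mem hρ] using
    hf.continuousOn.integrableOn_compact (μ := ρ) hK

lemma ae_mem_image_map {X Y : Type*} [TopologicalSpace X] [MeasurableSpace X]
    [OpensMeasurableSpace X] [TopologicalSpace Y] [T2Space Y] [MeasurableSpace Y] [BorelSpace Y]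
    {μ : Measure X} {T : X → Y} {K : Set X} (hT : Continuous T) (hK : IsCompact K)
    (hμK : ∀ᵐ x ∂μ, x ∈ K) : ∀ᵐ y ∂μ.map T, y ∈ T '' K :=
  (ae_map_iff hT.aemeasurable (hK.image hT).measurableSet).2 <|
    hμK.mono fun _ hx => mem_image_of_mem T hx

lemma continuous_fenchelYoungGap {F : Type*} [NormedAddCommGroup F] [InnerProductSpace ℝ F]
    {φ ψ : F → ℝ} (hφ : Continuous φ) (hψ : Continuous ψ) :
    Continuous (fenchelYoungGap φ ψ) := by
  unfold fenchelYoungGap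
  fun_prop

lemma integral_half_sq_norm_sub_eq_integral_fenchelYoungGap {E : Type*} [NormedAddCommGroup E]
    [InnerProductSpace ℝ E] [CompleteSpace E] [MeasurableSpace E] [BorelSpace E]
    [SecondCountableTopology E] {μ : Measure E} [IsFiniteMeasure μ] {π : Measure (E × E)}
    [IsFiniteMeasure π] {φ : E → ℝ} {T : E → E} {K : Set E} (hφ : ConvexOn ℝ univ φ)
    (hgrad : ∀ x, HasGradientAt φ (T x) x) (hT : Continuous T) (hK : IsCompact K)
    (hμK : ∀ᵐ x ∂μ, x ∈ K) (hπ₁ : π.map Prod.fst = μ) (hπ₂ : π.map Prod.snd = μ.map T) :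
    ∫ p, 1 / 2 * ‖p.1 - p.2‖ ^ 2 ∂π - ∫ x, 1 / 2 * ‖x - T x‖ ^ 2 ∂μ =
      ∫ p, fenchelYoungGap φ (restrictedConjugate φ K) p ∂π := by
  set ψ := restrictedConjugate φ K
  have hφc : Continuous φ := continuous_iff_continuousAt.2 fun x => (hgrad x).continuousAt
  have hψc : Continuous ψ := continuous_restrictedConjugate hK hφc.continuousOn
  have hν := ae_mem_image_map hT hK hμK
  set u : E → ℝ := fun x => 1 / 2 * ‖x‖ ^ 2 - φ x
  set v : E → ℝ := fun y => 1 / 2 * ‖y‖ ^ 2 - ψ y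
  have hu : Integrable u μ := (by fun_prop : Continuous u).integrable_of_ae_mem_compact hK hμK
  have hv : Integrable v (μ.map T) :=
    (by fun_prop : Continuous v).integrable_of_ae_mem_compact (hK.image hT) hν
  have hcost (p : E × E) : 1 / 2 * ‖p.1 - p.2‖ ^ 2 = fenchelYoungGap φ ψ p + u p.1 + v p.2 := by
    simp only [fenchelYoungGap, u, v, norm_sub_sq_real]
    ring
  have hcoupling : ∫ p, 1 / 2 * ‖p.1 - p.2‖ ^ 2 ∂π =
      ∫ p, fenchelYoungGap φ ψ p ∂π + ∫ x, u x ∂μ + ∫ y, v y ∂μ.map T := by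
    simp_rw [hcost]
    refine integral_add_fst_add_snd hπ₁ hπ₂ ?_ hu hv
    exact (continuous_fenchelYoungGap hφc hψc).integrable_of_ae_mem_compact
      (hK.prod (hK.image hT)) (ae_mem_prod_of_map_fst_of_map_snd hπ₁ hπ₂ hμK hν)
  -- Fenchel–Young is an equality on the graph of `T` over `K`
  have hgraph : ∫ x, 1 / 2 * ‖x - T x‖ ^ 2 ∂μ = ∫ x, u x ∂μ + ∫ y, v y ∂μ.map T := by
    rw [integral_map hT.aemeasurable hv.aestronglyMeasurable,
      ← integral_add (g := fun x => v (T x)) hu (hv.comp_measurable hT.measurable)]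
    refine integral_congr_ae (hμK.mono fun x hx => ?_)
    have hψ : ψ (T x) = ⟪x, T x⟫ - φ x := hφ.restrictedConjugate_eq (hgrad x) hx
    have hzero : fenchelYoungGap φ ψ (x, T x) = 0 := by
      simp only [fenchelYoungGap, hψ]
      ring
    simpa only [hzero, zero_add] using hcost (x, T x)
  rw [hcoupling, hgraph]
  ring

theorem stmt_9_general (d : ℕ) (L : ℝ) (hL : 0 < L)
    (μ ν : Measure (EuclideanSpace ℝ (Fin d)))
    [IsProbabilityMeasure μ]
    (Kμ : Set (EuclideanSpace ℝ (Fin d)))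
    (hKμ : IsCompact Kμ) (hμK : μ Kμᶜ = 0)
    (φ : EuclideanSpace ℝ (Fin d) → ℝ)
    (hconv : ConvexOn ℝ Set.univ φ)
    (T : EuclideanSpace ℝ (Fin d) → EuclideanSpace ℝ (Fin d))
    (hgrad : ∀ x, HasGradientAt φ (T x) x)
    (hlip : LipschitzWith (Real.toNNReal L) T)
    (hpush : Measure.map T μ = ν)
    (c : EuclideanSpace ℝ (Fin d) × EuclideanSpace ℝ (Fin d) → ℝ)
    (hc : ∀ p, c p = (1 / 2) * ‖p.1 - p.2‖ ^ 2)
    (πstar : Measure (EuclideanSpace ℝ (Fin d) × EuclideanSpace ℝ (Fin d)))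
    (hπstar : πstar = Measure.map (fun x => (x, T x)) μ)
    (π : Measure (EuclideanSpace ℝ (Fin d) × EuclideanSpace ℝ (Fin d)))
    [IsProbabilityMeasure π]
    (hπ1 : Measure.map Prod.fst π = μ) (hπ2 : Measure.map Prod.snd π = ν) :
    ∫ p, ‖p.2 - T p.1‖ ^ 2 ∂π ≤ 2 * L * (∫ p, c p ∂π - ∫ p, c p ∂πstar) := by
  obtain rfl : c = fun p => 1 / 2 * ‖p.1 - p.2‖ ^ 2 := funext hc
  subst hπstar hpush
  have hT : Continuous T := hlip.continuous
  have hφ : Continuous φ := continuous_iff_continuousAt.2 fun x => (hgrad x).continuousAt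
  have hμ : ∀ᵐ x ∂μ, x ∈ Kμ := mem_ae_iff.2 hμK
  have hπK := ae_mem_prod_of_map_fst_of_map_snd hπ1 hπ2 hμ (ae_mem_image_map hT hKμ hμ)
  have hK := hKμ.prod (hKμ.image hT)
  have hgap := continuous_fenchelYoungGap hφ (continuous_restrictedConjugate hKμ hφ.continuousOn)
  rw [integral_map (by fun_prop) (by fun_prop : Continuous _).aestronglyMeasurable,
    integral_half_sq_norm_sub_eq_integral_fenchelYoungGap hconv hgrad hT hKμ hμ hπ1 hπ2,
    ← integral_const_mul]
  refine integral_mono_ae ((by fun_prop : Continuous _).integrable_of_ae_mem_compact hK hπK)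
    ((hgap.const_mul _).integrable_of_ae_mem_compact hK hπK) ?_
  filter_upwards [hπK] with ⟨x, y⟩ ⟨_, w, hw, hwy⟩
  subst hwy
  simpa [Real.coe_toNNReal L hL.le] using
    hconv.sq_norm_sub_le_fenchelYoungGap hgrad hlip (Real.toNNReal_pos.2 hL) hw x

/-- For compactly supported `μ, ν`, convex `φ` with `L`-Lipschitz gradient `T = ∇φ`,
`T_#μ = ν`, and `π* = (Id,T)_#μ` optimal for the quadratic cost, every coupling `π`
of `(μ,ν)` satisfies `∫ ‖y - T x‖² dπ ≤ 2L (∫ c dπ - ∫ c dπ*)`. -/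
theorem stmt_9 (d : ℕ) (L : ℝ) (hL : 0 < L)
    (μ ν : Measure (EuclideanSpace ℝ (Fin d)))
    [IsProbabilityMeasure μ] [IsProbabilityMeasure ν]
    (Kμ Kν : Set (EuclideanSpace ℝ (Fin d)))
    (hKμ : IsCompact Kμ) (hKν : IsCompact Kν) (hμK : μ Kμᶜ = 0) (hνK : ν Kνᶜ = 0)
    (φ : EuclideanSpace ℝ (Fin d) → ℝ)
    (hconv : ConvexOn ℝ Set.univ φ)
    (T : EuclideanSpace ℝ (Fin d) → EuclideanSpace ℝ (Fin d))
    (hgrad : ∀ x, HasGradientAt φ (T x) x)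
    (hlip : LipschitzWith (Real.toNNReal L) T)
    (hpush : Measure.map T μ = ν)
    (c : EuclideanSpace ℝ (Fin d) × EuclideanSpace ℝ (Fin d) → ℝ)
    (hc : ∀ p, c p = (1 / 2) * ‖p.1 - p.2‖ ^ 2)
    (πstar : Measure (EuclideanSpace ℝ (Fin d) × EuclideanSpace ℝ (Fin d)))
    (hπstar : πstar = Measure.map (fun x => (x, T x)) μ)
    (hopt : ∀ π' : Measure (EuclideanSpace ℝ (Fin d) × EuclideanSpace ℝ (Fin d)),
      IsProbabilityMeasure π' → Measure.map Prod.fst π' = μ → Measure.map Prod.snd π' = ν →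
      ∫ p, c p ∂πstar ≤ ∫ p, c p ∂π')
    (π : Measure (EuclideanSpace ℝ (Fin d) × EuclideanSpace ℝ (Fin d)))
    [IsProbabilityMeasure π]
    (hπ1 : Measure.map Prod.fst π = μ) (hπ2 : Measure.map Prod.snd π = ν) :
    ∫ p, ‖p.2 - T p.1‖ ^ 2 ∂π ≤ 2 * L * (∫ p, c p ∂π - ∫ p, c p ∂πstar) :=
  stmt_9_general d L hL μ ν Kμ hKμ hμK φ hconv T hgrad hlip hpush c hc πstar hπstar π hπ1 hπ2
end

section
/- Let μ be a probability measure on ℝ^d with density f_μ(x) = Z₀^{-1} exp(-½(x - m₀)ᵀΣ₀^{-1}(x - m₀)) · 1_{Ω₀}(x) and ν a probability measure with density f_ν(y) = Z₁^{-1} exp(-½(y - m₁)ᵀΣ₁^{-1}(y - m₁)) · 1_{Ω₁}(y), where Ω₀, Ω₁ ⊂ ℝ^d are bounded open sets with nonempty interior and Σ₀, Σ₁ are symmetric positive definite. Suppose T(x) = Ax + a with A symmetric positive definite pushes μ forward to ν. Then Ω₁ = AΩ₀ + a up to Lebesgue-null sets, m₁ = Am₀ + a, and Σ₁ = AΣ₀A.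 -/
/-!
Pushing a truncated Gaussian forward by `x ↦ A x + a` gives, by the change of variables formula,
the truncated Gaussian on `A Ω₀ + a` with centre `A m₀ + a` and precision `A⁻¹ Σ₀⁻¹ A⁻¹`
(`A` is symmetric). Two such densities defining the same measure agree almost everywhere; being
positive and continuous on open supports, the supports differ by a null set and the densities
agree pointwise on the intersection, a nonempty open set. Taking logarithms there, two quadratic
polynomials differ by a constant on an open set, which forces their quadratic and linear parts to
agree.
-/

open MeasureTheory Matrix Set Filter Topology
open scoped RealInnerProductSpace ENNReal

theorem MeasurableEquiv.map_withDensity {α β : Type*} [MeasurableSpace α] [MeasurableSpace β]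
    (e : α ≃ᵐ β) (μ : Measure α) (f : α → ℝ≥0∞) :
    (μ.withDensity f).map e = (μ.map e).withDensity (f ∘ e.symm) := by
  ext s hs
  rw [e.map_apply, withDensity_apply _ (e.measurable hs), withDensity_apply _ hs,
    e.restrict_map, lintegral_map_equiv]
  simp

section AddHaar

variable {E : Type*} [NormedAddCommGroup E] [NormedSpace ℝ E] [MeasurableSpace E] [BorelSpace E]
  [FiniteDimensional ℝ E] (μ : Measure E) [μ.IsAddHaarMeasure]

theorem map_linearEquiv_add_addHaar (e : E ≃ₗ[ℝ] E) (a : E) :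
    μ.map (fun x => e x + a) = ENNReal.ofReal |(LinearMap.det (e : E →ₗ[ℝ] E))⁻¹| • μ := by
  have he : Measurable (e : E →ₗ[ℝ] E) := (e : E →ₗ[ℝ] E).continuous_of_finiteDimensional.measurable
  change μ.map ((· + a) ∘ (e : E →ₗ[ℝ] E)) = _
  rw [← Measure.map_map (measurable_add_const a) he,
    μ.map_linearMap_addHaar_eq_smul_addHaar (LinearEquiv.isUnit_det' e).ne_zero,
    Measure.map_smul, map_add_right_eq_self]

theorem map_withDensity_linearEquiv_add (e : E ≃ₗ[ℝ] E) (a : E) (f : E → ℝ≥0∞) :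
    (μ.withDensity f).map (fun x => e x + a) = μ.withDensity
      (fun y => ENNReal.ofReal |(LinearMap.det (e : E →ₗ[ℝ] E))⁻¹| * f (e.symm (y - a))) := by
  let τ : E ≃ᵐ E :=
    (e.toContinuousLinearEquiv.toHomeomorph.trans (Homeomorph.addRight a)).toMeasurableEquiv
  have hτ : (fun x => e x + a) = τ := rfl
  rw [hτ, τ.map_withDensity, ← hτ, map_linearEquiv_add_addHaar, withDensity_smul_measure,
    ← withDensity_smul' _ _ ENNReal.ofReal_ne_top]
  congr 1
  ext y
  change _ * f (e.symm (y + -a)) = _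
  rw [← sub_eq_add_neg]

end AddHaar

theorem measure_symmDiff_eq_zero_of_indicator_ae_eq {α M : Type*} [MeasurableSpace α]
    {μ : Measure α} [Zero M] {U V : Set α} {f g : α → M} (hf : ∀ x, f x ≠ 0)
    (hg : ∀ x, g x ≠ 0) (h : U.indicator f =ᵐ[μ] V.indicator g) : μ (symmDiff U V) = 0 := by
  refine measure_mono_null (fun x hx => ?_) (ae_iff.mp h)
  rcases mem_symmDiff.mp hx with ⟨hU, hV⟩ | ⟨hV, hU⟩
  · simp [hU, hV, hf]
  · simp [hU, hV, Ne.symm (hg x)]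

theorem eqOn_inter_of_indicator_ae_eq {α M : Type*} [TopologicalSpace α] [MeasurableSpace α]
    [OpensMeasurableSpace α] {μ : Measure α} [μ.IsOpenPosMeasure] [TopologicalSpace M]
    [T2Space M] [Zero M] {U V : Set α} {f g : α → M} (hU : IsOpen U) (hV : IsOpen V)
    (hf : Continuous f) (hg : Continuous g) (h : U.indicator f =ᵐ[μ] V.indicator g) :
    EqOn f g (U ∩ V) := by
  refine Measure.eqOn_open_of_ae_eq (μ := μ) ?_ (hU.inter hV) hf.continuousOn hg.continuousOn
  filter_upwards [ae_restrict_of_ae h, ae_restrict_mem (hU.inter hV).measurableSet]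
    with x hx hmem
  simpa [hmem.1, hmem.2] using hx

theorem inter_nonempty_of_measure_symmDiff_eq_zero {α : Type*} [TopologicalSpace α]
    [MeasurableSpace α] {μ : Measure α} [μ.IsOpenPosMeasure] {U V : Set α} (hU : IsOpen U)
    (hne : U.Nonempty) (h : μ (symmDiff U V) = 0) : (U ∩ V).Nonempty := by
  by_contra hUV
  have hsub : U ⊆ symmDiff U V := fun x hx =>
    mem_symmDiff.mpr (Or.inl ⟨hx, fun hxV => hUV ⟨x, hx, hxV⟩⟩)
  exact (hU.measure_pos μ hne).ne' (measure_mono_null hsub h)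

namespace LinearMap.IsSymmetric

variable {E : Type*} [NormedAddCommGroup E] [InnerProductSpace ℝ E]

theorem inner_sub_map_sub {L : E →ₗ[ℝ] E} (hL : L.IsSymmetric) (y b : E) :
    ⟪y - b, L (y - b)⟫ = ⟪y, L y⟫ - 2 * ⟪y, L b⟫ + ⟪b, L b⟫ := by
  have hsymm : ⟪b, L y⟫ = ⟪y, L b⟫ := by rw [← hL, real_inner_comm]
  simp only [map_sub, inner_sub_left, inner_sub_right, hsymm]
  ring

theorem comp_comp_self {S L : E →ₗ[ℝ] E} (hS : S.IsSymmetric) (hL : L.IsSymmetric) :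
    (S ∘ₗ L ∘ₗ S).IsSymmetric := fun x y => by
  simp only [LinearMap.comp_apply]
  rw [hS, hL, hS]

theorem eq_zero_of_quadratic_const_on_open {Q : E →ₗ[ℝ] E} (hQ : Q.IsSymmetric) {w : E}
    {c : ℝ} {U : Set E} (hU : IsOpen U) (hne : U.Nonempty)
    (h : ∀ y ∈ U, ⟪y, Q y⟫ - 2 * ⟪y, w⟫ = c) : Q = 0 ∧ w = 0 := by
  obtain ⟨y₀, hy₀⟩ := hne
  -- second and first differences at `y₀` in the direction `v`
  have hnear : ∀ᶠ v in 𝓝 (0 : E), ⟪v, Q v⟫ = 0 ∧ ⟪v, Q y₀ - w⟫ = 0 := by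
    have hplus : ∀ᶠ v in 𝓝 (0 : E), y₀ + v ∈ U :=
      (continuous_const.add continuous_id).continuousAt.preimage_mem_nhds
        (by simpa using hU.mem_nhds hy₀)
    have hminus : ∀ᶠ v in 𝓝 (0 : E), y₀ - v ∈ U :=
      (continuous_const.sub continuous_id).continuousAt.preimage_mem_nhds
        (by simpa using hU.mem_nhds hy₀)
    filter_upwards [hplus, hminus] with v hp hm
    have ep := h _ hp
    have em := h _ hm
    have e₀ := h _ hy₀
    have hsymm : ⟪y₀, Q v⟫ = ⟪v, Q y₀⟫ := by rw [← hQ, real_inner_comm]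
    simp only [map_add, map_sub, inner_add_left, inner_add_right, inner_sub_left,
      inner_sub_right, hsymm] at ep em ⊢
    constructor <;> linarith
  have hall : ∀ v, ⟪v, Q v⟫ = 0 ∧ ⟪v, Q y₀ - w⟫ = 0 := by
    intro v
    have hscale : Tendsto (fun t : ℝ => t • v) (𝓝[≠] 0) (𝓝 0) :=
      ((continuous_id.smul continuous_const : Continuous fun t : ℝ => t • v).tendsto' 0 0
        (zero_smul ℝ v)).mono_left nhdsWithin_le_nhds
    obtain ⟨t, ⟨hquad, hlin⟩, ht : t ≠ 0⟩ :=
      ((hscale.eventually hnear).and self_mem_nhdsWithin).exists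
    simp only [map_smul, inner_smul_left, inner_smul_right, RCLike.conj_to_real] at hquad hlin
    exact ⟨by simpa [ht] using hquad, by simpa [ht] using hlin⟩
  have hQ0 : Q = 0 :=
    hQ.inner_map_self_eq_zero.mp fun x => by rw [real_inner_comm]; exact (hall x).1
  have hw : Q y₀ - w = 0 := inner_self_eq_zero.mp (hall _).2
  exact ⟨hQ0, by simpa [hQ0] using hw⟩

theorem eq_of_inner_sub_map_sub_eq_add_const {L₀ L₁ : E →ₗ[ℝ] E} (hL₀ : L₀.IsSymmetric)
    (hL₁ : L₁.IsSymmetric) {b₀ b₁ : E} {κ : ℝ} {U : Set E} (hU : IsOpen U) (hne : U.Nonempty)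
    (h : ∀ y ∈ U, ⟪y - b₀, L₀ (y - b₀)⟫ = ⟪y - b₁, L₁ (y - b₁)⟫ + κ) :
    L₀ = L₁ ∧ L₀ b₀ = L₁ b₁ := by
  have hconst : ∀ y ∈ U, ⟪y, (L₀ - L₁) y⟫ - 2 * ⟪y, L₀ b₀ - L₁ b₁⟫
      = κ + ⟪b₁, L₁ b₁⟫ - ⟪b₀, L₀ b₀⟫ := by
    intro y hy
    have := h y hy
    rw [hL₀.inner_sub_map_sub, hL₁.inner_sub_map_sub] at this
    simp only [LinearMap.sub_apply, inner_sub_right]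
    linarith
  obtain ⟨hQ, hw⟩ := (hL₀.sub hL₁).eq_zero_of_quadratic_const_on_open hU hne hconst
  exact ⟨sub_eq_zero.mp hQ, sub_eq_zero.mp hw⟩

end LinearMap.IsSymmetric

section TruncatedGaussian

variable {E : Type*} [NormedAddCommGroup E] [InnerProductSpace ℝ E]

/-- `L` plays the role of the precision operator `Σ⁻¹`. -/
noncomputable def gaussianDensity (Z : ℝ) (m : E) (L : E →ₗ[ℝ] E) (x : E) : ℝ :=
  Z⁻¹ * Real.exp (-(1 / 2) * ⟪x - m, L (x - m)⟫)

noncomputable def truncatedGaussian (Ω : Set E) (Z : ℝ) (m : E) (L : E →ₗ[ℝ] E) : E → ℝ≥0∞ :=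
  Ω.indicator fun x => ENNReal.ofReal (gaussianDensity Z m L x)

theorem gaussianDensity_pos {Z : ℝ} (hZ : 0 < Z) (m : E) (L : E →ₗ[ℝ] E) (x : E) :
    0 < gaussianDensity Z m L x :=
  mul_pos (inv_pos.mpr hZ) (Real.exp_pos _)

theorem continuous_gaussianDensity [FiniteDimensional ℝ E] (Z : ℝ) (m : E) (L : E →ₗ[ℝ] E) :
    Continuous (gaussianDensity Z m L) := by
  have hL := L.continuous_of_finiteDimensional
  unfold gaussianDensity
  fun_prop

theorem gaussianDensity_linearEquiv_symm_sub (Z : ℝ) (m : E) (L : E →ₗ[ℝ] E) {e : E ≃ₗ[ℝ] E}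
    (he : (e.symm : E →ₗ[ℝ] E).IsSymmetric) (a y : E) :
    gaussianDensity Z m L (e.symm (y - a))
      = gaussianDensity Z (e m + a) ((e.symm : E →ₗ[ℝ] E) ∘ₗ L ∘ₗ e.symm) y := by
  have hcenter : e.symm (y - a) - m = e.symm (y - (e m + a)) := by
    rw [sub_add_eq_sub_sub_swap, map_sub e.symm (y - a) (e m), LinearEquiv.symm_apply_apply]
  simp only [gaussianDensity, hcenter, LinearMap.comp_apply, LinearEquiv.coe_coe]
  rw [← LinearEquiv.coe_coe, ← he]

theorem inner_sub_map_sub_eq_add_log_of_gaussianDensity_eq {Z₀ Z₁ : ℝ} (hZ₀ : 0 < Z₀)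
    (hZ₁ : 0 < Z₁) {b₀ b₁ : E} {L₀ L₁ : E →ₗ[ℝ] E} {y : E}
    (h : gaussianDensity Z₀ b₀ L₀ y = gaussianDensity Z₁ b₁ L₁ y) :
    ⟪y - b₀, L₀ (y - b₀)⟫ = ⟪y - b₁, L₁ (y - b₁)⟫ + 2 * Real.log (Z₁ / Z₀) := by
  have hlog := congrArg Real.log h
  simp only [gaussianDensity] at hlog
  rw [Real.log_mul (inv_pos.mpr hZ₀).ne' (Real.exp_pos _).ne',
    Real.log_mul (inv_pos.mpr hZ₁).ne' (Real.exp_pos _).ne', Real.log_exp, Real.log_exp,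
    Real.log_inv, Real.log_inv] at hlog
  rw [Real.log_div hZ₁.ne' hZ₀.ne']
  linarith

theorem map_affine_withDensity_truncatedGaussian [FiniteDimensional ℝ E] [MeasurableSpace E]
    [BorelSpace E] (μ : Measure E) [μ.IsAddHaarMeasure] (Ω : Set E) (Z : ℝ) (m : E)
    (L : E →ₗ[ℝ] E) {e : E ≃ₗ[ℝ] E} (he : (e : E →ₗ[ℝ] E).IsSymmetric) (a : E) :
    (μ.withDensity (truncatedGaussian Ω Z m L)).map (fun x => e x + a)
      = μ.withDensity (truncatedGaussian ((fun x => e x + a) '' Ω)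
          (Z * |LinearMap.det (e : E →ₗ[ℝ] E)|) (e m + a)
          ((e.symm : E →ₗ[ℝ] E) ∘ₗ L ∘ₗ e.symm)) := by
  rw [map_withDensity_linearEquiv_add, image_eq_preimage_of_inverse
    (g := fun y => e.symm (y - a)) (fun x => by simp) (fun y => by simp)]
  congr 1
  funext y
  simp only [truncatedGaussian]
  by_cases hy : y ∈ (fun y => e.symm (y - a)) ⁻¹' Ω
  · rw [indicator_of_mem hy, indicator_of_mem (mem_preimage.mp hy),
      ← ENNReal.ofReal_mul (abs_nonneg _),
      gaussianDensity_linearEquiv_symm_sub _ _ _ he.toLinearMap_symm]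
    congr 1
    simp only [gaussianDensity, abs_inv, mul_inv]
    ring
  · rw [indicator_of_notMem hy, indicator_of_notMem (mt mem_preimage.mpr hy), mul_zero]

theorem eq_of_withDensity_truncatedGaussian_eq [FiniteDimensional ℝ E] [MeasurableSpace E]
    [OpensMeasurableSpace E] {μ : Measure E} [μ.IsOpenPosMeasure] [SigmaFinite μ]
    {Ω₀ Ω₁ : Set E} (hΩ₀ : IsOpen Ω₀) (hΩ₁ : IsOpen Ω₁) (hne : Ω₀.Nonempty) {Z₀ Z₁ : ℝ}
    (hZ₀ : 0 < Z₀) (hZ₁ : 0 < Z₁) {m₀ m₁ : E} {L₀ L₁ : E →ₗ[ℝ] E} (hL₀ : L₀.IsSymmetric)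
    (hL₁ : L₁.IsSymmetric)
    (h : μ.withDensity (truncatedGaussian Ω₀ Z₀ m₀ L₀)
      = μ.withDensity (truncatedGaussian Ω₁ Z₁ m₁ L₁)) :
    μ (symmDiff Ω₀ Ω₁) = 0 ∧ L₀ = L₁ ∧ L₀ m₀ = L₁ m₁ := by
  have hcont : ∀ Z m L, Continuous fun x : E => ENNReal.ofReal (gaussianDensity Z m L x) :=
    fun Z m L => ENNReal.continuous_ofReal.comp (continuous_gaussianDensity Z m L)
  have hpos : ∀ {Z : ℝ} m L, 0 < Z → ∀ x : E, ENNReal.ofReal (gaussianDensity Z m L x) ≠ 0 :=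
    fun m L hZ x => (ENNReal.ofReal_pos.mpr (gaussianDensity_pos hZ m L x)).ne'
  have hae : truncatedGaussian Ω₀ Z₀ m₀ L₀ =ᵐ[μ] truncatedGaussian Ω₁ Z₁ m₁ L₁ :=
    (withDensity_eq_iff_of_sigmaFinite
      ((hcont _ _ _).measurable.indicator hΩ₀.measurableSet).aemeasurable
      ((hcont _ _ _).measurable.indicator hΩ₁.measurableSet).aemeasurable).mp h
  have hnull := measure_symmDiff_eq_zero_of_indicator_ae_eq (hpos m₀ L₀ hZ₀) (hpos m₁ L₁ hZ₁) hae
  have hEq := eqOn_inter_of_indicator_ae_eq hΩ₀ hΩ₁ (hcont _ _ _) (hcont _ _ _) hae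
  refine ⟨hnull, hL₀.eq_of_inner_sub_map_sub_eq_add_const hL₁ (κ := 2 * Real.log (Z₁ / Z₀))
    (hΩ₀.inter hΩ₁) (inter_nonempty_of_measure_symmDiff_eq_zero hΩ₀ hne hnull) fun y hy => ?_⟩
  refine inner_sub_map_sub_eq_add_log_of_gaussianDensity_eq hZ₀ hZ₁ ?_
  exact (ENNReal.ofReal_eq_ofReal_iff (gaussianDensity_pos hZ₀ m₀ L₀ y).le
    (gaussianDensity_pos hZ₁ m₁ L₁ y).le).mp (hEq hy)

end TruncatedGaussian

theorem stmt_15_general (d : ℕ)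
    (Ω₀ Ω₁ : Set (EuclideanSpace ℝ (Fin d)))
    (hΩ₀o : IsOpen Ω₀) (hΩ₁o : IsOpen Ω₁)
    (hΩ₁ne : Ω₁.Nonempty)
    (m₀ m₁ : EuclideanSpace ℝ (Fin d))
    (S₀ S₁ : Matrix (Fin d) (Fin d) ℝ) (hS₀ : S₀.PosDef) (hS₁ : S₁.PosDef)
    (Z₀ Z₁ : ℝ) (hZ₀ : 0 < Z₀) (hZ₁ : 0 < Z₁)
    (μ ν : Measure (EuclideanSpace ℝ (Fin d)))
    (hμ : μ = volume.withDensity (fun x =>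
      Set.indicator Ω₀ (fun x => ENNReal.ofReal (Z₀⁻¹ *
        Real.exp (-(1 / 2) * ⟪x - m₀, Matrix.toEuclideanLin S₀⁻¹ (x - m₀)⟫))) x))
    (hν : ν = volume.withDensity (fun y =>
      Set.indicator Ω₁ (fun y => ENNReal.ofReal (Z₁⁻¹ *
        Real.exp (-(1 / 2) * ⟪y - m₁, Matrix.toEuclideanLin S₁⁻¹ (y - m₁)⟫))) y))
    (A : Matrix (Fin d) (Fin d) ℝ) (hA : A.PosDef) (a : EuclideanSpace ℝ (Fin d))
    (T : EuclideanSpace ℝ (Fin d) → EuclideanSpace ℝ (Fin d))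
    (hT : ∀ x, T x = Matrix.toEuclideanLin A x + a)
    (hpush : Measure.map T μ = ν) :
    volume (symmDiff Ω₁ (T '' Ω₀)) = 0 ∧
    m₁ = Matrix.toEuclideanLin A m₀ + a ∧
    S₁ = A * S₀ * A := by
  have hAdet : IsUnit A.det := (isUnit_iff_isUnit_det A).mp hA.isUnit
  let e : EuclideanSpace ℝ (Fin d) ≃ₗ[ℝ] EuclideanSpace ℝ (Fin d) :=
    LinearEquiv.ofLinearMap (toEuclideanLin A) (toEuclideanLin A⁻¹)
      (by rw [← toLpLin_mul_same, mul_nonsing_inv A hAdet, toLpLin_one])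
      (by rw [← toLpLin_mul_same, nonsing_inv_mul A hAdet, toLpLin_one])
  obtain rfl : T = fun x => e x + a := funext hT
  have he : (e : EuclideanSpace ℝ (Fin d) →ₗ[ℝ] _).IsSymmetric :=
    isSymmetric_toEuclideanLin_iff.mpr hA.isHermitian
  have hμ' : μ = volume.withDensity (truncatedGaussian Ω₀ Z₀ m₀ (toEuclideanLin S₀⁻¹)) := hμ
  have hν' : ν = volume.withDensity (truncatedGaussian Ω₁ Z₁ m₁ (toEuclideanLin S₁⁻¹)) := hν
  rw [hμ', hν', map_affine_withDensity_truncatedGaussian _ _ _ _ _ he] at hpush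
  obtain ⟨hnull, hL, hm⟩ := eq_of_withDensity_truncatedGaussian_eq hΩ₁o
    ((e.toContinuousLinearEquiv.toHomeomorph.trans (Homeomorph.addRight a)).isOpenMap _ hΩ₀o)
    hΩ₁ne hZ₁ (mul_pos hZ₀ (abs_pos.mpr (LinearEquiv.isUnit_det' e).ne_zero))
    (isSymmetric_toEuclideanLin_iff.mpr hS₁.inv.isHermitian)
    (he.toLinearMap_symm.comp_comp_self (isSymmetric_toEuclideanLin_iff.mpr hS₀.inv.isHermitian))
    hpush.symm
  refine ⟨hnull, ?_, ?_⟩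
  · rw [← hL] at hm
    exact WithLp.ofLp_injective 2
      (mulVec_injective_of_isUnit hS₁.inv.isUnit (congrArg WithLp.ofLp hm))
  · have hconj : (e.symm : EuclideanSpace ℝ (Fin d) →ₗ[ℝ] _) ∘ₗ toEuclideanLin S₀⁻¹ ∘ₗ e.symm
        = toEuclideanLin (A * S₀ * A)⁻¹ := by
      rw [Matrix.mul_inv_rev, Matrix.mul_inv_rev, ← mul_assoc, toLpLin_mul_same, toLpLin_mul_same]
      rfl
    rw [hconj] at hL
    exact inv_inj (toEuclideanLin.injective hL) ((isUnit_iff_isUnit_det S₁).mp hS₁.isUnit)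

/-- Necessity: if an affine map `T(x) = Ax + a` with `A ≻ 0` pushes a truncated
Gaussian `μ` (parameters `m₀, S₀`, domain `Ω₀`) forward to a truncated Gaussian `ν`
(parameters `m₁, S₁`, domain `Ω₁`), then `Ω₁ = AΩ₀ + a` up to Lebesgue-null sets,
`m₁ = Am₀ + a`, and `S₁ = AS₀A`. -/
theorem stmt_15 (d : ℕ)
    (Ω₀ Ω₁ : Set (EuclideanSpace ℝ (Fin d)))
    (hΩ₀o : IsOpen Ω₀) (hΩ₁o : IsOpen Ω₁)
    (hΩ₀b : Bornology.IsBounded Ω₀) (hΩ₁b : Bornology.IsBounded Ω₁)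
    (hΩ₀ne : Ω₀.Nonempty) (hΩ₁ne : Ω₁.Nonempty)
    (m₀ m₁ : EuclideanSpace ℝ (Fin d))
    (S₀ S₁ : Matrix (Fin d) (Fin d) ℝ) (hS₀ : S₀.PosDef) (hS₁ : S₁.PosDef)
    (Z₀ Z₁ : ℝ) (hZ₀ : 0 < Z₀) (hZ₁ : 0 < Z₁)
    (μ ν : Measure (EuclideanSpace ℝ (Fin d)))
    [IsProbabilityMeasure μ] [IsProbabilityMeasure ν]
    (hμ : μ = volume.withDensity (fun x =>
      Set.indicator Ω₀ (fun x => ENNReal.ofReal (Z₀⁻¹ *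
        Real.exp (-(1 / 2) * ⟪x - m₀, Matrix.toEuclideanLin S₀⁻¹ (x - m₀)⟫))) x))
    (hν : ν = volume.withDensity (fun y =>
      Set.indicator Ω₁ (fun y => ENNReal.ofReal (Z₁⁻¹ *
        Real.exp (-(1 / 2) * ⟪y - m₁, Matrix.toEuclideanLin S₁⁻¹ (y - m₁)⟫))) y))
    (A : Matrix (Fin d) (Fin d) ℝ) (hA : A.PosDef) (a : EuclideanSpace ℝ (Fin d))
    (T : EuclideanSpace ℝ (Fin d) → EuclideanSpace ℝ (Fin d))
    (hT : ∀ x, T x = Matrix.toEuclideanLin A x + a)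
    (hpush : Measure.map T μ = ν) :
    volume (symmDiff Ω₁ (T '' Ω₀)) = 0 ∧
    m₁ = Matrix.toEuclideanLin A m₀ + a ∧
    S₁ = A * S₀ * A :=
  stmt_15_general d Ω₀ Ω₁ hΩ₀o hΩ₁o hΩ₁ne m₀ m₁ S₀ S₁ hS₀ hS₁ Z₀ Z₁ hZ₀ hZ₁ μ ν hμ hν A hA a T hT
    hpush
end
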